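/- arXiv:1702.00317 — 4 statements merged into one kernel-verified Lean document; each statement's English description precedes it below -/
import Mathlib

section
/- For the ideal linear regression problem, the SGD iterates satisfy the exact one-step recursion E[||θ_{k+1} - β*||²] = (1 + (α_k² - 2α_k)/d) · E[||θ_k - β*||²] + α_k² · Var(ε). -/
/-!
Write `e = θ_k - β*`, `x = X_{k+1}` and `p = ⟪x, e⟫`. Then `θ_{k+1} - β* = e + α_k (ε - p) x`,
and because `‖x‖ = 1` almost surely,
`‖θ_{k+1} - β*‖² = ‖e‖² + 2α_k(1 - α_k) ε p + (α_k² - 2α_k) p² + α_k² ε²`.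
The cross term has mean zero since `ε` is centred and independent of `(x, e)`. Since `x` is
uniform over an orthonormal basis `(b_j)` and independent of `e`, conditioning on the value of `x`
and Parseval give `E[p²] = d⁻¹ Σ_j E[⟪b_j, e⟫²] = d⁻¹ E‖e‖²`. Integrability of every term comes
from the iterates being almost surely bounded, by induction on `k`.
-/

open MeasureTheory Filter Finset
open scoped ENNReal RealInnerProductSpace

open ProbabilityTheory

theorem Matrix.exists_orthonormalBasis_coe_eq_cols {ι : Type*} [Fintype ι] [DecidableEq ι]
    {Q : Matrix ι ι ℝ} (hQ : Q.transpose * Q = 1)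
    {col : ι → EuclideanSpace ℝ ι} (hcol : ∀ i j, col j i = Q i j) :
    ∃ b : OrthonormalBasis ι ℝ (EuclideanSpace ℝ ι), ⇑b = col := by
  have hon : Orthonormal ℝ col := by
    rw [orthonormal_iff_ite]
    intro i j
    simpa [PiLp.inner_apply, hcol, Matrix.mul_apply, Matrix.one_apply, mul_comm]
      using congr_fun₂ hQ i j
  have hspan : Submodule.span ℝ (Set.range col) = ⊤ :=
    hon.linearIndependent.span_eq_top_of_card_eq_finrank' (finrank_euclideanSpace).symm
  exact ⟨OrthonormalBasis.mk hon hspan.ge, OrthonormalBasis.coe_mk hon hspan.ge⟩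

theorem norm_add_smul_sub_inner_sq {E : Type*} [NormedAddCommGroup E] [InnerProductSpace ℝ E]
    {x : E} (hx : ‖x‖ = 1) (e : E) (a c : ℝ) :
    ‖e + (a * (c - ⟪x, e⟫)) • x‖ ^ 2
      = ‖e‖ ^ 2 + (2 * a - 2 * a ^ 2) * (c * ⟪x, e⟫) + (a ^ 2 - 2 * a) * ⟪x, e⟫ ^ 2
        + a ^ 2 * c ^ 2 := by
  rw [norm_add_sq_real, inner_smul_right, real_inner_comm, norm_smul, hx, Real.norm_eq_abs,
    mul_one, sq_abs]
  ring

section FiniteValued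

variable {Ω E F ι : Type*} [MeasurableSpace Ω] {μ : Measure Ω}
  [MeasurableSpace E] [MeasurableSpace F] [Fintype ι]

theorem ae_exists_eq_of_measure_eq_inv_card [MeasurableSingletonClass E] [IsProbabilityMeasure μ]
    [Nonempty ι] {X : Ω → E} (hX : Measurable X) {b : ι → E} (hb : Function.Injective b)
    (hunif : ∀ j, μ {ω | X ω = b j} = (Fintype.card ι : ℝ≥0∞)⁻¹) :
    ∀ᵐ ω ∂μ, ∃ j, X ω = b j := by
  have hmeas : ∀ j, MeasurableSet {ω | X ω = b j} := fun j => hX (measurableSet_singleton _)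
  have hdisj : Pairwise (Function.onFun Disjoint fun j => {ω | X ω = b j}) :=
    fun i j hij => Set.disjoint_left.2 fun ω hi hj => hij (hb (hi.symm.trans hj))
  have hunion : {ω | ∃ j, X ω = b j} = ⋃ j, {ω | X ω = b j} := by ext; simp
  rw [ae_iff_measure_eq (hunion ▸ (MeasurableSet.iUnion hmeas).nullMeasurableSet), hunion,
    measure_iUnion hdisj hmeas, tsum_fintype]
  simp only [hunif, sum_const, card_univ, nsmul_eq_mul, measure_univ]
  exact ENNReal.mul_inv_cancel (by simp) (by simp)

theorem integral_indicator_preimage_comp_of_indepFun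
    {X : Ω → E} {Z : Ω → F} (hXZ : IndepFun X Z μ) (hX : Measurable X) (hZ : AEMeasurable Z μ)
    {s : Set E} (hs : MeasurableSet s) {f : F → ℝ} (hf : Measurable f) :
    ∫ ω, (X ⁻¹' s).indicator (fun ω => f (Z ω)) ω ∂μ = μ.real (X ⁻¹' s) * ∫ ω, f (Z ω) ∂μ := by
  rw [integral_indicator (hX hs)]
  exact ((IndepFun_iff_Indep X Z μ).1 hXZ).setIntegral_eq_mul hX.comap_le hZ ⟨s, hs, rfl⟩
    hf.aestronglyMeasurable

theorem integral_comp_of_indepFun_of_ae_exists_eq [MeasurableSingletonClass E]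
    {X : Ω → E} {Z : Ω → F} (hXZ : IndepFun X Z μ) (hX : Measurable X) (hZ : AEMeasurable Z μ)
    {b : ι → E} (hb : Function.Injective b) (hXb : ∀ᵐ ω ∂μ, ∃ j, X ω = b j)
    {g : E → F → ℝ} (hg : ∀ j, Measurable (g (b j)))
    (hint : ∀ j, Integrable (fun ω => g (b j) (Z ω)) μ) :
    ∫ ω, g (X ω) (Z ω) ∂μ = ∑ j, μ.real {ω | X ω = b j} * ∫ ω, g (b j) (Z ω) ∂μ := by
  have hmeas : ∀ j, MeasurableSet {ω | X ω = b j} := fun j => hX (measurableSet_singleton _)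
  have hsum : (fun ω => g (X ω) (Z ω)) =ᵐ[μ]
      fun ω => ∑ j, {ω | X ω = b j}.indicator (fun ω => g (b j) (Z ω)) ω := by
    filter_upwards [hXb] with ω ⟨i, hi⟩
    rw [sum_eq_single i (fun j _ hji => Set.indicator_of_notMem
      (fun hj => hji (hb (hj.symm.trans hi))) _) (by simp),
      Set.indicator_of_mem (s := {ω | X ω = b i}) hi, hi]
  rw [integral_congr_ae hsum, integral_finsetSum _ fun j _ => (hint j).indicator (hmeas j)]
  exact sum_congr rfl fun j _ =>
    integral_indicator_preimage_comp_of_indepFun hXZ hX hZ (measurableSet_singleton _) (hg j)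

end FiniteValued

section UniformOrthonormal

variable {Ω E ι : Type*} [MeasurableSpace Ω] {μ : Measure Ω} [IsProbabilityMeasure μ]
  [NormedAddCommGroup E] [InnerProductSpace ℝ E] [FiniteDimensional ℝ E]
  [MeasurableSpace E] [BorelSpace E] [Fintype ι] [Nonempty ι]

theorem integral_inner_sq_of_uniform_orthonormalBasis (b : OrthonormalBasis ι ℝ E)
    {X Z : Ω → E} (hX : Measurable X) (hZ : MemLp Z 2 μ) (hXZ : IndepFun X Z μ)
    (hunif : ∀ j, μ {ω | X ω = b j} = (Fintype.card ι : ℝ≥0∞)⁻¹) :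
    ∫ ω, ⟪X ω, Z ω⟫ ^ 2 ∂μ = (∫ ω, ‖Z ω‖ ^ 2 ∂μ) / Fintype.card ι := by
  have hb : Function.Injective b := b.orthonormal.linearIndependent.injective
  have hint : ∀ j, Integrable (fun ω => ⟪b j, Z ω⟫ ^ 2) μ := fun j =>
    (hZ.integrable_norm_pow two_ne_zero).mono'
      ((aestronglyMeasurable_const.inner hZ.1).pow 2) (ae_of_all _ fun ω => by
        rw [norm_pow, Real.norm_eq_abs]
        gcongr
        simpa [b.orthonormal.1 j] using abs_real_inner_le_norm (b j) (Z ω))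
  rw [integral_comp_of_indepFun_of_ae_exists_eq hXZ hX hZ.1.aemeasurable hb
    (ae_exists_eq_of_measure_eq_inv_card hX hb hunif) (g := fun x z => ⟪x, z⟫ ^ 2)
    (fun j => (measurable_const.inner measurable_id).pow_const 2) hint]
  simp only [measureReal_def, hunif, ENNReal.toReal_inv, ENNReal.toReal_natCast]
  rw [← mul_sum, ← integral_finsetSum _ fun j _ => hint j]
  simp only [b.sum_sq_inner_right]
  ring

theorem ae_norm_eq_one_of_uniform_orthonormalBasis (b : OrthonormalBasis ι ℝ E) {X : Ω → E}
    (hX : Measurable X) (hunif : ∀ j, μ {ω | X ω = b j} = (Fintype.card ι : ℝ≥0∞)⁻¹) :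
    ∀ᵐ ω ∂μ, ‖X ω‖ = 1 := by
  filter_upwards [ae_exists_eq_of_measure_eq_inv_card hX
    b.orthonormal.linearIndependent.injective hunif] with ω ⟨j, hj⟩
  rw [hj, b.orthonormal.1 j]

theorem integral_norm_sq_sgd_step (b : OrthonormalBasis ι ℝ E) {X e : Ω → E} {ε : Ω → ℝ}
    (hX : Measurable X) (he : MemLp e 2 μ) (hε : MemLp ε 2 μ)
    (hunif : ∀ j, μ {ω | X ω = b j} = (Fintype.card ι : ℝ≥0∞)⁻¹)
    (hXe : IndepFun X e μ) (hεXe : IndepFun ε (fun ω => (X ω, e ω)) μ)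
    (hεmean : ∫ ω, ε ω ∂μ = 0) (a : ℝ) :
    ∫ ω, ‖e ω + (a * (ε ω - ⟪X ω, e ω⟫)) • X ω‖ ^ 2 ∂μ
      = (1 + (a ^ 2 - 2 * a) / Fintype.card ι) * ∫ ω, ‖e ω‖ ^ 2 ∂μ
        + a ^ 2 * ∫ ω, ε ω ^ 2 ∂μ := by
  have hXnorm := ae_norm_eq_one_of_uniform_orthonormalBasis b hX hunif
  have hp : MemLp (fun ω => ⟪X ω, e ω⟫) 2 μ := by
    refine he.of_le (hX.aestronglyMeasurable.inner he.1) ?_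
    filter_upwards [hXnorm] with ω hω
    simpa [hω] using abs_real_inner_le_norm (X ω) (e ω)
  have hcross : ∫ ω, ε ω * ⟪X ω, e ω⟫ ∂μ = 0 := by
    have hεp : IndepFun ε (fun ω => ⟪X ω, e ω⟫) μ :=
      hεXe.comp measurable_id (measurable_fst.inner measurable_snd)
    simpa [hεmean] using hεp.integral_mul_eq_mul_integral hε.1 hp.1
  have he2 : Integrable (fun ω => ‖e ω‖ ^ 2) μ := he.integrable_norm_pow two_ne_zero
  have hεp : Integrable (fun ω => ε ω * ⟪X ω, e ω⟫) μ := hε.integrable_mul hp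
  have hp2 : Integrable (fun ω => ⟪X ω, e ω⟫ ^ 2) μ := hp.integrable_sq
  have hε2 : Integrable (fun ω => ε ω ^ 2) μ := hε.integrable_sq
  rw [integral_congr_ae (hXnorm.mono fun ω hω => norm_add_smul_sub_inner_sq hω (e ω) a (ε ω)),
    integral_add (by fun_prop) (by fun_prop), integral_add (by fun_prop) (by fun_prop),
    integral_add (by fun_prop) (by fun_prop), integral_const_mul, integral_const_mul,
    integral_const_mul, hcross, integral_inner_sq_of_uniform_orthonormalBasis b hX he hXe hunif]
  ring

end UniformOrthonormal

section Iterates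

variable {Ω E : Type*} [MeasurableSpace Ω] [NormedAddCommGroup E] [InnerProductSpace ℝ E]
  {X θ : ℕ → Ω → E} {Y : ℕ → Ω → ℝ} {α : ℕ → ℝ}

theorem measurable_sgd_iterate [MeasurableSpace E] [BorelSpace E] [SecondCountableTopology E]
    (hX : ∀ k, Measurable (X k)) (hY : ∀ k, Measurable (Y k)) (hθ0 : Measurable (θ 0))
    (hθ : ∀ k ω, θ (k + 1) ω
        = θ k ω + (α k * (Y (k + 1) ω - ⟪X (k + 1) ω, θ k ω⟫)) • X (k + 1) ω) (n : ℕ) :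
    Measurable (θ n) := by
  induction n with
  | zero => exact hθ0
  | succ n ih =>
    rw [funext (hθ n)]
    exact ih.add ((((hY _).sub ((hX _).inner ih)).const_mul _).smul (hX _))

theorem exists_ae_norm_sgd_iterate_le {μ : Measure Ω} {R B : ℝ}
    (hX : ∀ k, ∀ᵐ ω ∂μ, ‖X k ω‖ ≤ R) (hY : ∀ k, ∀ᵐ ω ∂μ, |Y k ω| ≤ B)
    (hθ0 : ∃ C, ∀ᵐ ω ∂μ, ‖θ 0 ω‖ ≤ C)
    (hθ : ∀ k ω, θ (k + 1) ω
        = θ k ω + (α k * (Y (k + 1) ω - ⟪X (k + 1) ω, θ k ω⟫)) • X (k + 1) ω) (n : ℕ) :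
    ∃ C, ∀ᵐ ω ∂μ, ‖θ n ω‖ ≤ C := by
  induction n with
  | zero => exact hθ0
  | succ n ih =>
    obtain ⟨C, hC⟩ := ih
    refine ⟨C + |α n| * (B + R * C) * R, ?_⟩
    filter_upwards [hC, hX (n + 1), hY (n + 1)] with ω hθω hXω hYω
    have hR : 0 ≤ R := (norm_nonneg _).trans hXω
    have hinner : |⟪X (n + 1) ω, θ n ω⟫| ≤ R * C :=
      (abs_real_inner_le_norm _ _).trans (mul_le_mul hXω hθω (norm_nonneg _) hR)
    have hresid : |Y (n + 1) ω - ⟪X (n + 1) ω, θ n ω⟫| ≤ B + R * C :=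
      (abs_sub _ _).trans (add_le_add hYω hinner)
    calc ‖θ (n + 1) ω‖
        ≤ ‖θ n ω‖ + |α n| * |Y (n + 1) ω - ⟪X (n + 1) ω, θ n ω⟫| * ‖X (n + 1) ω‖ := by
          rw [hθ, ← Real.norm_eq_abs, ← Real.norm_eq_abs, ← norm_mul, ← norm_smul]
          exact norm_add_le _ _
      _ ≤ C + |α n| * (B + R * C) * R := by
          gcongr
          exact mul_nonneg (abs_nonneg _) ((abs_nonneg _).trans hresid)

end Iterates

theorem sgd_ideal_one_step_recursion_general
    {Ω : Type*} [MeasurableSpace Ω] (μ : Measure Ω) [IsProbabilityMeasure μ]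
    (d : ℕ) (hd : 0 < d)
    (Q : Matrix (Fin d) (Fin d) ℝ) (hQ : Q.transpose * Q = 1)
    (col : Fin d → EuclideanSpace ℝ (Fin d)) (hcol : ∀ i j, col j i = Q i j)
    (X : ℕ → Ω → EuclideanSpace ℝ (Fin d)) (ε : ℕ → Ω → ℝ)
    (hXmeas : ∀ k, Measurable (X k)) (hεmeas : ∀ k, Measurable (ε k))
    (hXunif : ∀ k j, μ {ω | X k ω = col j} = (d : ℝ≥0∞)⁻¹)
    (hεmean : ∀ k, ∫ ω, ε k ω ∂μ = 0)
    (v : ℝ) (hεvar : ∀ k, ∫ ω, (ε k ω) ^ 2 ∂μ = v)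
    (M : ℝ) (hεbdd : ∀ k ω, |ε k ω| ≤ M)
    (α : ℕ → ℝ)
    (βstar θ0 : EuclideanSpace ℝ (Fin d))
    (Y : ℕ → Ω → ℝ) (hY : ∀ k ω, Y k ω = ⟪X k ω, βstar⟫ + ε k ω)
    (θ : ℕ → Ω → EuclideanSpace ℝ (Fin d))
    (hθ0 : ∀ ω, θ 0 ω = θ0)
    (hθ : ∀ k ω, θ (k + 1) ω
        = θ k ω + (α k * (Y (k + 1) ω - ⟪X (k + 1) ω, θ k ω⟫)) • X (k + 1) ω)
    (hindepX : ∀ k, ProbabilityTheory.IndepFun (X (k + 1)) (θ k) μ)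
    (hindepε : ∀ k,
      ProbabilityTheory.IndepFun (ε (k + 1)) (fun ω => (X (k + 1) ω, θ k ω)) μ)
    (k : ℕ) :
    ∫ ω, ‖θ (k + 1) ω - βstar‖ ^ 2 ∂μ
      = (1 + ((α k) ^ 2 - 2 * α k) / d) * ∫ ω, ‖θ k ω - βstar‖ ^ 2 ∂μ
        + (α k) ^ 2 * v := by
  obtain ⟨b, rfl⟩ := Matrix.exists_orthonormalBasis_coe_eq_cols hQ hcol
  have : Nonempty (Fin d) := ⟨⟨0, hd⟩⟩
  have hunif : ∀ n j, μ {ω | X n ω = b j} = (Fintype.card (Fin d) : ℝ≥0∞)⁻¹ := by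
    simpa using hXunif
  have hXnorm n := ae_norm_eq_one_of_uniform_orthonormalBasis b (hXmeas n) (hunif n)
  have hYbdd : ∀ n, ∀ᵐ ω ∂μ, |Y n ω| ≤ ‖βstar‖ + M := fun n => by
    filter_upwards [hXnorm n] with ω hω
    rw [hY]
    refine (abs_add_le _ _).trans (add_le_add ?_ (hεbdd n ω))
    simpa [hω] using abs_real_inner_le_norm (X n ω) βstar
  have hYmeas n : Measurable (Y n) :=
    (funext (hY n)).symm ▸ ((hXmeas n).inner measurable_const).add (hεmeas n)
  have hθmeas :=
    measurable_sgd_iterate hXmeas hYmeas (by rw [funext hθ0]; exact measurable_const) hθ k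
  obtain ⟨C, hC⟩ := exists_ae_norm_sgd_iterate_le (R := 1)
    (fun n => (hXnorm n).mono fun _ h => h.le) hYbdd ⟨‖θ0‖, ae_of_all _ fun ω => (hθ0 ω).symm ▸ le_rfl⟩ hθ k
  have he : MemLp (fun ω => θ k ω - βstar) 2 μ :=
    (MemLp.of_bound hθmeas.aestronglyMeasurable C hC).sub (memLp_const βstar)
  have hε : MemLp (ε (k + 1)) 2 μ :=
    MemLp.of_bound (hεmeas _).aestronglyMeasurable M (ae_of_all _ (hεbdd (k + 1)))
  have hstep : ∀ ω, θ (k + 1) ω - βstar = (θ k ω - βstar)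
      + (α k * (ε (k + 1) ω - ⟪X (k + 1) ω, θ k ω - βstar⟫)) • X (k + 1) ω := fun ω => by
    rw [hθ, hY, inner_sub_right, add_sub_right_comm]
    ring_nf
  simp_rw [hstep]
  rw [integral_norm_sq_sgd_step b (hXmeas _) he hε (hunif _)
    ((hindepX k).comp measurable_id (measurable_id.sub_const βstar))
    ((hindepε k).comp measurable_id (measurable_fst.prodMk (measurable_snd.sub_const βstar)))
    (hεmean _), hεvar, Fintype.card_fin]

/-- For the ideal linear regression problem (X uniform over the columns of an
orthonormal matrix, Y = X'β* + ε with ε mean-zero, bounded, independent of X and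
of the current iterate), the SGD iterates satisfy the exact one-step recursion
`E[‖θ_{k+1} - β*‖²] = (1 + (α_k² - 2α_k)/d) E[‖θ_k - β*‖²] + α_k² Var(ε)`. -/
theorem sgd_ideal_one_step_recursion
    {Ω : Type*} [MeasurableSpace Ω] (μ : Measure Ω) [IsProbabilityMeasure μ]
    (d : ℕ) (hd : 0 < d)
    (Q : Matrix (Fin d) (Fin d) ℝ) (hQ : Q.transpose * Q = 1)
    (col : Fin d → EuclideanSpace ℝ (Fin d)) (hcol : ∀ i j, col j i = Q i j)
    (X : ℕ → Ω → EuclideanSpace ℝ (Fin d)) (ε : ℕ → Ω → ℝ)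
    (hXmeas : ∀ k, Measurable (X k)) (hεmeas : ∀ k, Measurable (ε k))
    (hXunif : ∀ k j, μ {ω | X k ω = col j} = (d : ℝ≥0∞)⁻¹)
    (hεmean : ∀ k, ∫ ω, ε k ω ∂μ = 0)
    (v : ℝ) (hεvar : ∀ k, ∫ ω, (ε k ω) ^ 2 ∂μ = v)
    (M : ℝ) (hεbdd : ∀ k ω, |ε k ω| ≤ M)
    (α : ℕ → ℝ) (hα : ∀ k, 0 ≤ α k)
    (βstar θ0 : EuclideanSpace ℝ (Fin d))
    (Y : ℕ → Ω → ℝ) (hY : ∀ k ω, Y k ω = ⟪X k ω, βstar⟫ + ε k ω)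
    (θ : ℕ → Ω → EuclideanSpace ℝ (Fin d))
    (hθ0 : ∀ ω, θ 0 ω = θ0)
    (hθ : ∀ k ω, θ (k + 1) ω
        = θ k ω + (α k * (Y (k + 1) ω - ⟪X (k + 1) ω, θ k ω⟫)) • X (k + 1) ω)
    (hindepX : ∀ k, ProbabilityTheory.IndepFun (X (k + 1)) (θ k) μ)
    (hindepε : ∀ k,
      ProbabilityTheory.IndepFun (ε (k + 1)) (fun ω => (X (k + 1) ω, θ k ω)) μ)
    (k : ℕ) :
    ∫ ω, ‖θ (k + 1) ω - βstar‖ ^ 2 ∂μ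
      = (1 + ((α k) ^ 2 - 2 * α k) / d) * ∫ ω, ‖θ k ω - βstar‖ ^ 2 ∂μ
        + (α k) ^ 2 * v :=
  sgd_ideal_one_step_recursion_general μ d hd Q hQ col hcol X ε hXmeas hεmeas hXunif hεmean v hεvar
    M hεbdd α βstar θ0 Y hY θ hθ0 hθ hindepX hindepε k
end

section
/- If learning rates α_k ∈ (0,1) satisfy the Robbins-Monro conditions ∑ α_k = ∞ and ∑ α_k² < ∞, then A_k := α_k² + ∑_{j=0}^{k-1} α_j² ∏_{l=j+1}^{k}(1 + (α_l² - 2α_l)/d) converges to 0 as k → ∞, for any fixed d ≥ 1. -/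
/-!
Write `ρ_l = 1 + (α_l² - 2α_l)/d`. Since `(α_l - 1)² ≥ 0` and `d ≥ 1` we have
`0 ≤ ρ_l`, and `1 + x ≤ eˣ` with `α_l² ≤ α_l` gives `ρ_l ≤ exp(-α_l/d) ≤ 1`.
Hence for fixed `j` the weight `∏_{l=j+1}^{k} ρ_l ≤ exp(-∑_{l=j+1}^{k} α_l / d)`
tends to `0` as `k → ∞` because `∑ α_l = ∞`, and the weighted sum of the summable
sequence `α_j²` tends to `0` by dominated convergence for series (Tannery).
-/

open Filter Finset Topology

theorem one_add_sq_sub_two_mul_div_nonneg (a : ℝ) {d : ℝ} (hd : 1 ≤ d) :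
    0 ≤ 1 + (a ^ 2 - 2 * a) / d := by
  have hd0 : 0 < d := zero_lt_one.trans_le hd
  have : -1 ≤ (a ^ 2 - 2 * a) / d := by
    rw [le_div_iff₀ hd0]
    nlinarith [sq_nonneg (a - 1)]
  linarith

theorem one_add_sq_sub_two_mul_div_le_exp {a d : ℝ} (ha₀ : 0 ≤ a) (ha₁ : a ≤ 1)
    (hd : 0 ≤ d) :
    1 + (a ^ 2 - 2 * a) / d ≤ Real.exp (-(a / d)) :=
  calc 1 + (a ^ 2 - 2 * a) / d ≤ -(a / d) + 1 := by
        rw [neg_div', add_comm]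
        gcongr
        nlinarith
    _ ≤ Real.exp (-(a / d)) := Real.add_one_le_exp _

theorem tendsto_prod_Ico_zero_of_le_exp {ρ c : ℕ → ℝ} (hρ : ∀ l, 0 ≤ ρ l)
    (hρc : ∀ l, ρ l ≤ Real.exp (-c l))
    (hc : Tendsto (fun n => ∑ l ∈ range n, c l) atTop atTop) (a : ℕ) :
    Tendsto (fun n => ∏ l ∈ Ico a n, ρ l) atTop (𝓝 0) := by
  have hbound (n : ℕ) : ∏ l ∈ Ico a n, ρ l ≤ Real.exp (-∑ l ∈ Ico a n, c l) :=
    calc ∏ l ∈ Ico a n, ρ l ≤ ∏ l ∈ Ico a n, Real.exp (-c l) :=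
          prod_le_prod (fun l _ => hρ l) (fun l _ => hρc l)
      _ = Real.exp (-∑ l ∈ Ico a n, c l) := by rw [← Real.exp_sum, sum_neg_distrib]
  have htail : Tendsto (fun n => ∑ l ∈ Ico a n, c l) atTop atTop := by
    refine (tendsto_atTop_add_const_right _ (-∑ l ∈ range a, c l) hc).congr' ?_
    filter_upwards [eventually_ge_atTop a] with n hn
    rw [sum_Ico_eq_sub _ hn, sub_eq_add_neg]
  exact squeeze_zero (fun n => prod_nonneg fun l _ => hρ l) hbound
    (Real.tendsto_exp_atBot.comp (tendsto_neg_atTop_atBot.comp htail))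

theorem tendsto_sum_range_mul_zero_of_summable {b : ℕ → ℝ} {P : ℕ → ℕ → ℝ}
    (hb : Summable b)
    (hP : ∀ k j, |P k j| ≤ 1) (hP0 : ∀ j, Tendsto (fun k => P k j) atTop (𝓝 0)) :
    Tendsto (fun k => ∑ j ∈ range k, b j * P k j) atTop (𝓝 0) := by
  set f : ℕ → ℕ → ℝ := fun k j => if j < k then b j * P k j else 0
  have hsum (k : ℕ) : ∑' j, f k j = ∑ j ∈ range k, b j * P k j := by
    rw [tsum_eq_sum (s := range k) fun j hj => if_neg (by simpa using hj)]
    exact sum_congr rfl fun j hj => if_pos (mem_range.1 hj)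
  have hf0 (j : ℕ) : Tendsto (f · j) atTop (𝓝 0) := by
    have hbP : Tendsto (fun k => b j * P k j) atTop (𝓝 0) := by
      simpa using (hP0 j).const_mul (b j)
    refine hbP.congr' ?_
    filter_upwards [eventually_gt_atTop j] with k hk
    exact (if_pos hk).symm
  have hfb : ∀ᶠ k in atTop, ∀ j, ‖f k j‖ ≤ |b j| := Eventually.of_forall fun k j => by
    simp only [f, Real.norm_eq_abs]
    split_ifs
    · rw [abs_mul]
      exact mul_le_of_le_one_right (abs_nonneg _) (hP k j)
    · simp
  simpa [hsum] using tendsto_tsum_of_dominated_convergence hb.abs hf0 hfb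

/-- If learning rates `α_k ∈ (0,1)` satisfy the Robbins-Monro conditions
`∑ α_k = ∞` and `∑ α_k² < ∞`, then
`A_k := α_k² + ∑_{j=0}^{k-1} α_j² ∏_{l=j+1}^{k}(1 + (α_l² - 2α_l)/d)` converges
to `0` as `k → ∞`, for any fixed `d ≥ 1`. -/
theorem robbins_monro_A_tendsto_zero
    (d : ℕ) (hd : 1 ≤ d)
    (α : ℕ → ℝ) (hα : ∀ k, α k ∈ Set.Ioo (0 : ℝ) 1)
    (hdiv : Filter.Tendsto (fun n => ∑ k ∈ Finset.range n, α k)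
      Filter.atTop Filter.atTop)
    (hsq : Summable (fun k => (α k) ^ 2))
    (A : ℕ → ℝ)
    (hA : ∀ k, A k = (α k) ^ 2
        + ∑ j ∈ Finset.range k, (α j) ^ 2
            * ∏ l ∈ Finset.Ico (j + 1) (k + 1),
                (1 + ((α l) ^ 2 - 2 * α l) / d)) :
    Filter.Tendsto A Filter.atTop (nhds 0) := by
  have hd' : (1 : ℝ) ≤ d := by exact_mod_cast hd
  set ρ : ℕ → ℝ := fun l => 1 + ((α l) ^ 2 - 2 * α l) / d
  have hρ0 (l : ℕ) : 0 ≤ ρ l := one_add_sq_sub_two_mul_div_nonneg _ hd'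
  have hρexp (l : ℕ) : ρ l ≤ Real.exp (-(α l / d)) :=
    one_add_sq_sub_two_mul_div_le_exp (hα l).1.le (hα l).2.le (by positivity)
  have hρ1 (l : ℕ) : ρ l ≤ 1 :=
    (hρexp l).trans <| Real.exp_le_one_iff.2 <|
      neg_nonpos.2 (div_nonneg (hα l).1.le (by positivity))
  have hdiv' : Tendsto (fun n => ∑ l ∈ range n, α l / d) atTop atTop := by
    simpa only [sum_div] using hdiv.atTop_div_const (by positivity)
  have hweight (j : ℕ) : Tendsto (fun k => ∏ l ∈ Ico (j + 1) (k + 1), ρ l) atTop (𝓝 0) :=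
    (tendsto_prod_Ico_zero_of_le_exp hρ0 hρexp hdiv' (j + 1)).comp (tendsto_add_atTop_nat 1)
  have hweight_abs (k j : ℕ) : |∏ l ∈ Ico (j + 1) (k + 1), ρ l| ≤ 1 := by
    rw [abs_of_nonneg (prod_nonneg fun l _ => hρ0 l)]
    exact prod_le_one (fun l _ => hρ0 l) (fun l _ => hρ1 l)
  rw [funext hA]
  simpa using hsq.tendsto_atTop_zero.add
    (tendsto_sum_range_mul_zero_of_summable hsq hweight_abs hweight)
end

section
/- Under the general strongly convex setting, SGD satisfies E[||θ_{k+1} - β*||₂²] ≤ ||θ_0 - β*||₂² ∏_{j=0}^{k}(1 - 2α_j σ + α_j² L²) + C·A_k, where A_k = α_k² + ∑_{j=0}^{k-1} α_j² ∏_{l=j+1}^{k}(1 - 2α_l σ + α_l² L²). -/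
/-!
Write `θₖ₊₁ - β* = Zₖ - αₖ Yₖ` with `Zₖ = θₖ - β* - αₖ (g θₖ - g β*)` and `Yₖ = Gₖ₊₁ - g θₖ`.
`Zₖ` is `Fₖ`-measurable and `Yₖ` has conditional mean zero, so the cross term vanishes in
expectation. Strong monotonicity and the Lipschitz bound shrink `‖Zₖ‖²` by the factor
`1 - 2αₖσ + αₖ²L²`, and the noise bound gives `E‖Yₖ‖² ≤ C`. The resulting one-step recursion
is unrolled by the discrete Grönwall inequality.
-/

open MeasureTheory Finset
open scoped RealInnerProductSpace

section InnerProductSpace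

variable {E : Type*} [NormedAddCommGroup E] [InnerProductSpace ℝ E]

theorem norm_sub_sub_smul_sub_sq_le {g : E → E} {σ L a : ℝ}
    (hsc : ∀ x y, σ * ‖x - y‖ ^ 2 ≤ ⟪g x - g y, x - y⟫)
    (hLip : ∀ x y, ‖g x - g y‖ ≤ L * ‖x - y‖) (ha : 0 ≤ a) (x y : E) :
    ‖x - y - a • (g x - g y)‖ ^ 2 ≤ (1 - 2 * a * σ + a ^ 2 * L ^ 2) * ‖x - y‖ ^ 2 := by
  have hmono : 2 * a * (σ * ‖x - y‖ ^ 2) ≤ 2 * a * ⟪x - y, g x - g y⟫ := by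
    rw [real_inner_comm]; gcongr; exact hsc x y
  have hlip : a ^ 2 * ‖g x - g y‖ ^ 2 ≤ a ^ 2 * (L * ‖x - y‖) ^ 2 := by
    gcongr; exact hLip x y
  rw [norm_sub_sq_real, inner_smul_right, norm_smul, mul_pow, Real.norm_eq_abs, sq_abs]
  linarith

section ConditionalExpectation

variable [CompleteSpace E] {Ω : Type*} {m m₀ : MeasurableSpace Ω} {μ : Measure Ω}

theorem integral_inner_eq_zero_of_condExp_eq_zero [IsFiniteMeasure μ] (hm : m ≤ m₀)
    {Z Y : Ω → E} (hZ : StronglyMeasurable[m] Z) (hZY : Integrable (fun ω ↦ ⟪Z ω, Y ω⟫) μ)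
    (hY : Integrable Y μ) (hY0 : μ[Y | m] =ᵐ[μ] 0) :
    ∫ ω, ⟪Z ω, Y ω⟫ ∂μ = 0 := by
  have hpull : μ[fun ω ↦ ⟪Z ω, Y ω⟫ | m] =ᵐ[μ] fun ω ↦ ⟪Z ω, μ[Y | m] ω⟫ :=
    condExp_bilin_of_stronglyMeasurable_left (innerSL ℝ) hZ hZY hY
  calc ∫ ω, ⟪Z ω, Y ω⟫ ∂μ = ∫ ω, μ[fun ω ↦ ⟪Z ω, Y ω⟫ | m] ω ∂μ := (integral_condExp hm).symm
    _ = ∫ ω, ⟪Z ω, (0 : E)⟫ ∂μ := by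
      refine integral_congr_ae ?_
      filter_upwards [hpull, hY0] with ω h h0
      rw [h, h0, Pi.zero_apply]
    _ = 0 := by simp

theorem integral_norm_sub_smul_sq_of_condExp_eq_zero [IsFiniteMeasure μ] (hm : m ≤ m₀)
    {Z Y : Ω → E} (hZ : StronglyMeasurable[m] Z) (hZ2 : MemLp Z 2 μ) (hY2 : MemLp Y 2 μ)
    (hY0 : μ[Y | m] =ᵐ[μ] 0) (a : ℝ) :
    ∫ ω, ‖Z ω - a • Y ω‖ ^ 2 ∂μ = ∫ ω, ‖Z ω‖ ^ 2 ∂μ + a ^ 2 * ∫ ω, ‖Y ω‖ ^ 2 ∂μ := by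
  have hZY : Integrable (fun ω ↦ ⟪Z ω, Y ω⟫) μ :=
    memLp_one_iff_integrable.mp <| hZ2.of_bilin (fun u v ↦ ⟪u, v⟫) 1 hY2
      (hZ2.aestronglyMeasurable.inner hY2.aestronglyMeasurable)
      (ae_of_all _ fun ω ↦ by simpa using nnnorm_inner_le_nnnorm (Z ω) (Y ω))
  have hcross := integral_inner_eq_zero_of_condExp_eq_zero hm hZ hZY
    (hY2.integrable one_le_two) hY0
  have hexpand : ∀ ω, ‖Z ω - a • Y ω‖ ^ 2
      = ‖Z ω‖ ^ 2 - 2 * a * ⟪Z ω, Y ω⟫ + a ^ 2 * ‖Y ω‖ ^ 2 := fun ω ↦ by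
    rw [norm_sub_sq_real, inner_smul_right, norm_smul, mul_pow, Real.norm_eq_abs, sq_abs]
    ring
  have hZsq : Integrable (fun ω ↦ ‖Z ω‖ ^ 2) μ := hZ2.norm.integrable_sq
  have hYsq : Integrable (fun ω ↦ a ^ 2 * ‖Y ω‖ ^ 2) μ := hY2.norm.integrable_sq.const_mul _
  have hZYa : Integrable (fun ω ↦ 2 * a * ⟪Z ω, Y ω⟫) μ := hZY.const_mul _
  simp_rw [hexpand]
  rw [integral_add (f := fun ω ↦ ‖Z ω‖ ^ 2 - 2 * a * ⟪Z ω, Y ω⟫) (hZsq.sub hZYa) hYsq,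
    integral_sub hZsq hZYa, integral_const_mul, integral_const_mul, hcross]
  ring

theorem integral_le_of_condExp_le [IsProbabilityMeasure μ] (hm : m ≤ m₀) {f : Ω → ℝ} {C : ℝ}
    (hf : ∀ᵐ ω ∂μ, μ[f | m] ω ≤ C) : ∫ ω, f ω ∂μ ≤ C := by
  rw [← integral_condExp hm]
  simpa using integral_mono_ae integrable_condExp (integrable_const C) hf

theorem integral_norm_sgd_step_sub_sq_le [IsProbabilityMeasure μ] (hm : m ≤ m₀)
    {g : E → E} {σ L C a : ℝ} (hsc : ∀ x y, σ * ‖x - y‖ ^ 2 ≤ ⟪g x - g y, x - y⟫)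
    (hLip : ∀ x y, ‖g x - g y‖ ≤ L * ‖x - y‖) {β : E} (hg0 : g β = 0) (ha : 0 ≤ a)
    {x G : Ω → E} (hx : StronglyMeasurable[m] x) (hx2 : MemLp x 2 μ) (hG2 : MemLp G 2 μ)
    (hmean : μ[G | m] =ᵐ[μ] fun ω ↦ g (x ω))
    (hnoise : ∀ᵐ ω ∂μ, μ[fun ω ↦ ‖G ω - g (x ω)‖ ^ 2 | m] ω ≤ C) :
    ∫ ω, ‖x ω - a • G ω - β‖ ^ 2 ∂μ
      ≤ (1 - 2 * a * σ + a ^ 2 * L ^ 2) * ∫ ω, ‖x ω - β‖ ^ 2 ∂μ + C * a ^ 2 := by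
  have hg : Continuous g :=
    (LipschitzWith.of_dist_le' fun u v ↦ by simpa only [dist_eq_norm] using hLip u v).continuous
  have hgx : StronglyMeasurable[m] fun ω ↦ g (x ω) := hg.comp_stronglyMeasurable hx
  have hgx2 : MemLp (fun ω ↦ g (x ω)) 2 μ := by
    refine ((hx2.sub (memLp_const β)).const_smul L).of_le (hgx.mono hm).aestronglyMeasurable
      (ae_of_all _ fun ω ↦ ?_)
    calc ‖g (x ω)‖ = ‖g (x ω) - g β‖ := by rw [hg0, sub_zero]
      _ ≤ L * ‖x ω - β‖ := hLip _ _
      _ ≤ ‖L • (x ω - β)‖ := by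
        rw [norm_smul, Real.norm_eq_abs]; gcongr; exact le_abs_self L
  set Y : Ω → E := G - fun ω ↦ g (x ω)
  -- `g β = 0` is kept in `Z` so that `Z ω` is literally the deterministic step bounded by
  -- `norm_sub_sub_smul_sub_sq_le`.
  set Z : Ω → E := fun ω ↦ x ω - β - a • (g (x ω) - g β)
  have hY0 : μ[Y | m] =ᵐ[μ] 0 := by
    filter_upwards [condExp_sub (m := m) (hG2.integrable one_le_two) (hgx2.integrable one_le_two),
      hmean] with ω hsub hG
    rw [hsub, Pi.sub_apply, hG, condExp_of_stronglyMeasurable hm hgx (hgx2.integrable one_le_two),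
      sub_self, Pi.zero_apply]
  have hZ : StronglyMeasurable[m] Z :=
    (hx.sub stronglyMeasurable_const).sub ((hgx.sub stronglyMeasurable_const).const_smul a)
  have hZ2 : MemLp Z 2 μ :=
    (hx2.sub (memLp_const β)).sub ((hgx2.sub (memLp_const (g β))).const_smul a)
  have hdecomp : ∀ ω, x ω - a • G ω - β = Z ω - a • Y ω := fun ω ↦ by
    simp only [Z, Y, Pi.sub_apply, hg0, sub_zero, smul_sub]; abel
  have hdrift : ∫ ω, ‖Z ω‖ ^ 2 ∂μ ≤ (1 - 2 * a * σ + a ^ 2 * L ^ 2) * ∫ ω, ‖x ω - β‖ ^ 2 ∂μ := by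
    rw [← integral_const_mul]
    exact integral_mono hZ2.norm.integrable_sq
      (((hx2.sub (memLp_const β)).norm.integrable_sq).const_mul _)
      fun ω ↦ norm_sub_sub_smul_sub_sq_le hsc hLip ha (x ω) β
  have hvar : ∫ ω, ‖Y ω‖ ^ 2 ∂μ ≤ C := integral_le_of_condExp_le hm hnoise
  simp_rw [hdecomp]
  rw [integral_norm_sub_smul_sq_of_condExp_eq_zero hm hZ hZ2 (hG2.sub hgx2) hY0]
  nlinarith [mul_le_mul_of_nonneg_left hvar (sq_nonneg a)]

end ConditionalExpectation

end InnerProductSpace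

theorem sgd_general_expected_error_bound_general
    {Ω : Type*} [m : MeasurableSpace Ω] (μ : Measure Ω) [IsProbabilityMeasure μ]
    (d : ℕ)
    (F : ℕ → MeasurableSpace Ω) (hF : ∀ k, F k ≤ m)
    (σc L C : ℝ)
    (α : ℕ → ℝ) (hα : ∀ k, 0 ≤ α k)
    (g : EuclideanSpace ℝ (Fin d) → EuclideanSpace ℝ (Fin d))
    (hsc : ∀ x y, σc * ‖x - y‖ ^ 2 ≤ ⟪g x - g y, x - y⟫)
    (hLip : ∀ x y, ‖g x - g y‖ ≤ L * ‖x - y‖)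
    (βstar : EuclideanSpace ℝ (Fin d)) (hg0 : g βstar = 0)
    (θinit : EuclideanSpace ℝ (Fin d))
    (θ G : ℕ → Ω → EuclideanSpace ℝ (Fin d))
    (hθ0 : ∀ ω, θ 0 ω = θinit)
    (hrec : ∀ k ω, θ (k + 1) ω = θ k ω - α k • G (k + 1) ω)
    (hθmeas : ∀ k, Measurable[F k] (θ k))
    (hθ2 : ∀ k, MemLp (θ k) 2 μ) (hG2 : ∀ k, MemLp (G k) 2 μ)
    (hmean : ∀ k, μ[G (k + 1) | F k] =ᵐ[μ] fun ω => g (θ k ω))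
    (hnoise : ∀ k, ∀ᵐ ω ∂μ,
      (μ[fun ωp => ‖G (k + 1) ωp - g (θ k ωp)‖ ^ 2 | F k]) ω ≤ C)
    (hfac : ∀ k, 0 ≤ 1 - 2 * α k * σc + (α k) ^ 2 * L ^ 2)
    (k : ℕ) :
    ∫ ω, ‖θ (k + 1) ω - βstar‖ ^ 2 ∂μ
      ≤ ‖θinit - βstar‖ ^ 2
          * ∏ j ∈ Finset.range (k + 1), (1 - 2 * α j * σc + (α j) ^ 2 * L ^ 2)
        + C * ((α k) ^ 2
            + ∑ j ∈ Finset.range k, (α j) ^ 2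
                * ∏ l ∈ Finset.Ico (j + 1) (k + 1),
                    (1 - 2 * α l * σc + (α l) ^ 2 * L ^ 2)) := by
  have hstep : ∀ n, ∫ ω, ‖θ (n + 1) ω - βstar‖ ^ 2 ∂μ
      ≤ (1 - 2 * α n * σc + α n ^ 2 * L ^ 2) * ∫ ω, ‖θ n ω - βstar‖ ^ 2 ∂μ + C * α n ^ 2 :=
    fun n ↦ by
      simpa only [hrec] using integral_norm_sgd_step_sub_sq_le (hF n) hsc hLip hg0 (hα n)
        (hθmeas n).stronglyMeasurable (hθ2 n) (hG2 (n + 1)) (hmean n) (hnoise n)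
  have hgron := discrete_gronwall_prod_general (n₀ := 0)
    (u := fun n ↦ ∫ ω, ‖θ n ω - βstar‖ ^ 2 ∂μ) (b := fun n ↦ C * α n ^ 2) (fun n _ ↦ hstep n)
    (fun n _ ↦ hfac n) (Nat.zero_le (k + 1))
  simp only [hθ0, integral_const, probReal_univ, one_smul, ← range_eq_Ico] at hgron
  rw [sum_range_succ, Ico_self, prod_empty, mul_one] at hgron
  rw [mul_add, mul_sum]
  simpa only [mul_assoc, add_comm] using hgron

/-- Under the general strongly convex setting, SGD satisfies
`E[‖θ_{k+1} - β*‖²] ≤ ‖θ₀ - β*‖² ∏_{j=0}^{k}(1 - 2α_j σ + α_j² L²) + C·A_k`,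
where `A_k = α_k² + ∑_{j=0}^{k-1} α_j² ∏_{l=j+1}^{k}(1 - 2α_l σ + α_l² L²)`. -/
theorem sgd_general_expected_error_bound
    {Ω : Type*} [m : MeasurableSpace Ω] (μ : Measure Ω) [IsProbabilityMeasure μ]
    (d : ℕ)
    (F : ℕ → MeasurableSpace Ω) (hF : ∀ k, F k ≤ m)
    (σc L C : ℝ) (hσ : 0 < σc) (hL : 0 ≤ L) (hC : 0 ≤ C)
    (α : ℕ → ℝ) (hα : ∀ k, 0 ≤ α k)
    (g : EuclideanSpace ℝ (Fin d) → EuclideanSpace ℝ (Fin d))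
    (hsc : ∀ x y, σc * ‖x - y‖ ^ 2 ≤ ⟪g x - g y, x - y⟫)
    (hLip : ∀ x y, ‖g x - g y‖ ≤ L * ‖x - y‖)
    (βstar : EuclideanSpace ℝ (Fin d)) (hg0 : g βstar = 0)
    (θinit : EuclideanSpace ℝ (Fin d))
    (θ G : ℕ → Ω → EuclideanSpace ℝ (Fin d))
    (hθ0 : ∀ ω, θ 0 ω = θinit)
    (hrec : ∀ k ω, θ (k + 1) ω = θ k ω - α k • G (k + 1) ω)
    (hθmeas : ∀ k, Measurable[F k] (θ k))
    (hθ2 : ∀ k, MemLp (θ k) 2 μ) (hG2 : ∀ k, MemLp (G k) 2 μ)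
    (hmean : ∀ k, μ[G (k + 1) | F k] =ᵐ[μ] fun ω => g (θ k ω))
    (hnoise : ∀ k, ∀ᵐ ω ∂μ,
      (μ[fun ωp => ‖G (k + 1) ωp - g (θ k ωp)‖ ^ 2 | F k]) ω ≤ C)
    (hfac : ∀ k, 0 ≤ 1 - 2 * α k * σc + (α k) ^ 2 * L ^ 2)
    (k : ℕ) :
    ∫ ω, ‖θ (k + 1) ω - βstar‖ ^ 2 ∂μ
      ≤ ‖θinit - βstar‖ ^ 2
          * ∏ j ∈ Finset.range (k + 1), (1 - 2 * α j * σc + (α j) ^ 2 * L ^ 2)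
        + C * ((α k) ^ 2
            + ∑ j ∈ Finset.range k, (α j) ^ 2
                * ∏ l ∈ Finset.Ico (j + 1) (k + 1),
                    (1 - 2 * α l * σc + (α l) ^ 2 * L ^ 2)) :=
  sgd_general_expected_error_bound_general (m := m) μ d F hF σc L C α hα g hsc hLip βstar hg0 θinit
    θ G hθ0 hrec hθmeas hθ2 hG2 hmean hnoise hfac k
end

section
/- For SGD on a σ-strongly convex risk with L-Lipschitz gradient and noise bound C, for any δ > 0: P(||θ_k - β*||₂ ≤ δ) ≥ 1 - [||θ_0 - β*||₂² ∏_{j=0}^{k-1}(1 - 2α_j σ + α_j² L²) + C·A_{k-1}]/δ². -/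
open MeasureTheory Filter Finset
open scoped ENNReal RealInnerProductSpace

/-!
The mean-square error `e_k = E‖θ_k - β*‖²` obeys `e_{k+1} ≤ (1 - 2α_kσ + α_k²L²) e_k + C α_k²`.
Write `θ_{k+1} - β* = v - α_k w` with `v = θ_k - α_k ∇R(θ_k) - β*` and `w = G_{k+1} - ∇R(θ_k)`.
The deterministic gradient step `v` is `F_k`-measurable and contracts by strong convexity and
the Lipschitz bound, while `w` has zero conditional mean, so `v ⊥ w` in `L²` and the cross term
vanishes. Unrolling the recursion bounds `e_{k+1}`, and Markov's inequality applied to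
`‖θ_{k+1} - β*‖²` turns it into the probability bound.
-/

theorem le_mul_prod_add_sum_of_le_mul_add {e ρ b : ℕ → ℝ} (hρ : ∀ n, 0 ≤ ρ n)
    (h : ∀ n, e (n + 1) ≤ ρ n * e n + b n) (k : ℕ) :
    e k ≤ e 0 * ∏ j ∈ range k, ρ j + ∑ j ∈ range k, b j * ∏ l ∈ Ico (j + 1) k, ρ l := by
  induction k with
  | zero => simp
  | succ k ih =>
    have hIco : ∀ j ∈ range k, b j * ∏ l ∈ Ico (j + 1) (k + 1), ρ l
        = ρ k * (b j * ∏ l ∈ Ico (j + 1) k, ρ l) := fun j hj => by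
      rw [prod_Ico_succ_top (mem_range.mp hj)]
      ring
    calc e (k + 1) ≤ ρ k * e k + b k := h k
      _ ≤ ρ k * (e 0 * ∏ j ∈ range k, ρ j
            + ∑ j ∈ range k, b j * ∏ l ∈ Ico (j + 1) k, ρ l) + b k := by
        gcongr
        exact hρ k
      _ = _ := by
        rw [prod_range_succ, sum_range_succ, sum_congr rfl hIco, Ico_self, prod_empty, ← mul_sum]
        ring

theorem one_sub_integral_norm_sq_div_le_measureReal {Ω E : Type*} [MeasurableSpace Ω]
    {μ : Measure Ω} [IsProbabilityMeasure μ] [NormedAddCommGroup E] {Y : Ω → E}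
    (hY : MemLp Y 2 μ) {δ : ℝ} (hδ : 0 < δ) :
    1 - (∫ ω, ‖Y ω‖ ^ 2 ∂μ) / δ ^ 2 ≤ μ.real {ω | ‖Y ω‖ ≤ δ} := by
  have hmarkov : δ ^ 2 * μ.real {ω | δ ^ 2 ≤ ‖Y ω‖ ^ 2} ≤ ∫ ω, ‖Y ω‖ ^ 2 ∂μ :=
    mul_meas_ge_le_integral_of_nonneg (ae_of_all _ fun _ => sq_nonneg _)
      hY.norm.integrable_sq _
  have hcompl : μ.real {ω | ‖Y ω‖ ≤ δ}ᶜ ≤ μ.real {ω | δ ^ 2 ≤ ‖Y ω‖ ^ 2} :=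
    measureReal_mono fun ω (hω : ¬‖Y ω‖ ≤ δ) => pow_le_pow_left₀ hδ.le (not_le.mp hω).le 2
  have hsum : μ.real {ω | ‖Y ω‖ ≤ δ} + μ.real {ω | ‖Y ω‖ ≤ δ}ᶜ = 1 := by
    rw [measureReal_add_measureReal_compl₀
      (nullMeasurableSet_le hY.aestronglyMeasurable.norm.aemeasurable aemeasurable_const),
      probReal_univ]
  have hcheb : μ.real {ω | δ ^ 2 ≤ ‖Y ω‖ ^ 2} ≤ (∫ ω, ‖Y ω‖ ^ 2 ∂μ) / δ ^ 2 :=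
    (le_div_iff₀' (by positivity)).mpr hmarkov
  linarith

section CondExp

variable {Ω E : Type*} {m m₀ : MeasurableSpace Ω} {μ : Measure Ω}
  [NormedAddCommGroup E] [InnerProductSpace ℝ E]

theorem MeasureTheory.MemLp.integrable_inner {v w : Ω → E} (hv : MemLp v 2 μ)
    (hw : MemLp w 2 μ) :
    Integrable (fun ω => ⟪v ω, w ω⟫) μ :=
  (L2.integrable_inner (hv.toLp v) (hw.toLp w)).congr <| by
    filter_upwards [hv.coeFn_toLp, hw.coeFn_toLp] with ω hvω hwω
    rw [hvω, hwω]

theorem integral_norm_sub_smul_sq_of_integral_inner_eq_zero {v w : Ω → E}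
    (hv : MemLp v 2 μ) (hw : MemLp w 2 μ) (horth : ∫ ω, ⟪v ω, w ω⟫ ∂μ = 0) (a : ℝ) :
    ∫ ω, ‖v ω - a • w ω‖ ^ 2 ∂μ = ∫ ω, ‖v ω‖ ^ 2 ∂μ + a ^ 2 * ∫ ω, ‖w ω‖ ^ 2 ∂μ := by
  have hexpand : ∀ ω, ‖v ω - a • w ω‖ ^ 2
      = ‖v ω‖ ^ 2 - 2 * a * ⟪v ω, w ω⟫ + a ^ 2 * ‖w ω‖ ^ 2 := fun ω => by
    rw [norm_sub_sq_real, real_inner_smul_right, norm_smul, mul_pow, Real.norm_eq_abs, sq_abs]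
    ring
  have hv_sq : Integrable (fun ω => ‖v ω‖ ^ 2) μ := hv.norm.integrable_sq
  have hw_sq : Integrable (fun ω => a ^ 2 * ‖w ω‖ ^ 2) μ := hw.norm.integrable_sq.const_mul _
  have hvw : Integrable (fun ω => 2 * a * ⟪v ω, w ω⟫) μ := (hv.integrable_inner hw).const_mul _
  have hv_sub : Integrable (fun ω => ‖v ω‖ ^ 2 - 2 * a * ⟪v ω, w ω⟫) μ := hv_sq.sub hvw
  simp_rw [hexpand]
  rw [integral_add hv_sub hw_sq, integral_sub hv_sq hvw, integral_const_mul,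
    integral_const_mul, horth]
  ring

variable [CompleteSpace E]

theorem integral_inner_eq_zero_of_condExp_eq_zero_s12 [IsFiniteMeasure μ] (hm : m ≤ m₀)
    {v w : Ω → E} (hv : StronglyMeasurable[m] v) (hv2 : MemLp v 2 μ) (hw2 : MemLp w 2 μ)
    (hw : μ[w | m] =ᵐ[μ] 0) :
    ∫ ω, ⟪v ω, w ω⟫ ∂μ = 0 := by
  have hpull : μ[fun ω => ⟪v ω, w ω⟫ | m] =ᵐ[μ] fun ω => ⟪v ω, (μ[w | m]) ω⟫ :=
    condExp_bilin_of_stronglyMeasurable_left (innerSL ℝ) hv (hv2.integrable_inner hw2)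
      (hw2.integrable one_le_two)
  calc ∫ ω, ⟪v ω, w ω⟫ ∂μ = ∫ ω, (μ[fun ω => ⟪v ω, w ω⟫ | m]) ω ∂μ :=
        (integral_condExp hm).symm
    _ = ∫ ω, (0 : ℝ) ∂μ := integral_congr_ae <| by
        filter_upwards [hpull, hw] with ω hpω hwω
        rw [hpω, hwω, Pi.zero_apply, inner_zero_right]
    _ = 0 := integral_zero _ _

theorem integral_le_of_ae_condExp_le [IsProbabilityMeasure μ] (hm : m ≤ m₀) {f : Ω → ℝ} {C : ℝ}
    (hf : ∀ᵐ ω ∂μ, (μ[f | m]) ω ≤ C) :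
    ∫ ω, f ω ∂μ ≤ C := by
  rw [← integral_condExp hm]
  calc ∫ ω, (μ[f | m]) ω ∂μ ≤ ∫ _, C ∂μ :=
        integral_mono_ae integrable_condExp (integrable_const C) hf
    _ = C := by simp

end CondExp

theorem norm_sub_smul_sub_sq_le {E : Type*} [NormedAddCommGroup E] [InnerProductSpace ℝ E]
    {g : E → E} {σ L a : ℝ} (ha : 0 ≤ a) (hsc : ∀ x y, σ * ‖x - y‖ ^ 2 ≤ ⟪g x - g y, x - y⟫)
    (hLip : ∀ x y, ‖g x - g y‖ ≤ L * ‖x - y‖) {β : E} (hg0 : g β = 0) (x : E) :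
    ‖x - a • g x - β‖ ^ 2 ≤ (1 - 2 * a * σ + a ^ 2 * L ^ 2) * ‖x - β‖ ^ 2 := by
  have hmono : σ * ‖x - β‖ ^ 2 ≤ ⟪x - β, g x⟫ := by
    simpa [hg0, real_inner_comm] using hsc x β
  have hgrowth : ‖g x‖ ^ 2 ≤ L ^ 2 * ‖x - β‖ ^ 2 := by
    rw [← mul_pow]
    exact pow_le_pow_left₀ (norm_nonneg _) (by simpa [hg0] using hLip x β) 2
  calc ‖x - a • g x - β‖ ^ 2 = ‖x - β‖ ^ 2 - 2 * a * ⟪x - β, g x⟫ + a ^ 2 * ‖g x‖ ^ 2 := by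
        rw [sub_right_comm, norm_sub_sq_real, real_inner_smul_right, norm_smul, mul_pow,
          Real.norm_eq_abs, sq_abs]
        ring
    _ ≤ ‖x - β‖ ^ 2 - 2 * a * (σ * ‖x - β‖ ^ 2) + a ^ 2 * (L ^ 2 * ‖x - β‖ ^ 2) := by
        gcongr
    _ = (1 - 2 * a * σ + a ^ 2 * L ^ 2) * ‖x - β‖ ^ 2 := by ring

theorem integral_norm_sub_smul_sub_sq_le {Ω E : Type*} {m m₀ : MeasurableSpace Ω}
    {μ : Measure Ω} [IsProbabilityMeasure μ]
    [NormedAddCommGroup E] [InnerProductSpace ℝ E] [CompleteSpace E] (hm : m ≤ m₀)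
    {g : E → E} {σ L C a : ℝ} (ha : 0 ≤ a) (hsc : ∀ x y, σ * ‖x - y‖ ^ 2 ≤ ⟪g x - g y, x - y⟫)
    (hLip : ∀ x y, ‖g x - g y‖ ≤ L * ‖x - y‖) {β : E} (hg0 : g β = 0)
    {X G : Ω → E} (hX : StronglyMeasurable[m] X) (hX2 : MemLp X 2 μ) (hG2 : MemLp G 2 μ)
    (hmean : μ[G | m] =ᵐ[μ] fun ω => g (X ω))
    (hnoise : ∀ᵐ ω ∂μ, (μ[fun ω => ‖G ω - g (X ω)‖ ^ 2 | m]) ω ≤ C) :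
    ∫ ω, ‖X ω - a • G ω - β‖ ^ 2 ∂μ
      ≤ (1 - 2 * a * σ + a ^ 2 * L ^ 2) * ∫ ω, ‖X ω - β‖ ^ 2 ∂μ + C * a ^ 2 := by
  have hg : LipschitzWith L.toNNReal g :=
    LipschitzWith.of_dist_le' fun x y => by simpa only [dist_eq_norm] using hLip x y
  have hgX : StronglyMeasurable[m] fun ω => g (X ω) := hg.continuous.comp_stronglyMeasurable hX
  have hXβ2 : MemLp (fun ω => X ω - β) 2 μ := hX2.sub (memLp_const β)
  have hgX2 : MemLp (fun ω => g (X ω)) 2 μ :=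
    hXβ2.of_le_mul (hgX.mono hm).aestronglyMeasurable
      (ae_of_all _ fun ω => by simpa [hg0] using hLip (X ω) β)
  set v : Ω → E := fun ω => X ω - a • g (X ω) - β
  set w : Ω → E := fun ω => G ω - g (X ω)
  have hv2 : MemLp v 2 μ := (hX2.sub (hgX2.const_smul a)).sub (memLp_const β)
  have hw2 : MemLp w 2 μ := hG2.sub hgX2
  have hw_mean : μ[w | m] =ᵐ[μ] 0 := by
    filter_upwards [condExp_sub (m := m) (hG2.integrable one_le_two) (hgX2.integrable one_le_two),
      hmean] with ω hsub hGω
    change μ[G - fun ω => g (X ω) | m] ω = 0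
    rw [hsub, Pi.sub_apply, hGω,
      condExp_of_stronglyMeasurable hm hgX (hgX2.integrable one_le_two), sub_self]
  have horth : ∫ ω, ⟪v ω, w ω⟫ ∂μ = 0 :=
    integral_inner_eq_zero_of_condExp_eq_zero_s12 hm
      ((hX.sub (hgX.const_smul a)).sub stronglyMeasurable_const) hv2 hw2 hw_mean
  have hsplit : ∫ ω, ‖X ω - a • G ω - β‖ ^ 2 ∂μ
      = ∫ ω, ‖v ω‖ ^ 2 ∂μ + a ^ 2 * ∫ ω, ‖w ω‖ ^ 2 ∂μ := by
    rw [← integral_norm_sub_smul_sq_of_integral_inner_eq_zero hv2 hw2 horth a]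
    congr 1 with ω
    simp only [v, w, smul_sub]
    congr 2
    abel
  have hv_bound :
      ∫ ω, ‖v ω‖ ^ 2 ∂μ ≤ (1 - 2 * a * σ + a ^ 2 * L ^ 2) * ∫ ω, ‖X ω - β‖ ^ 2 ∂μ := by
    rw [← integral_const_mul]
    exact integral_mono hv2.norm.integrable_sq (hXβ2.norm.integrable_sq.const_mul _)
      fun ω => norm_sub_smul_sub_sq_le ha hsc hLip hg0 (X ω)
  have hw_bound : ∫ ω, ‖w ω‖ ^ 2 ∂μ ≤ C := integral_le_of_ae_condExp_le hm hnoise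
  rw [hsplit]
  linarith [mul_le_mul_of_nonneg_left hw_bound (sq_nonneg a)]

-- Indexed by `k + 1`: the product runs over `j ≤ k` and the correction term is `A_k`.
theorem sgd_general_probability_lower_bound_general
    {Ω : Type*} [m : MeasurableSpace Ω] (μ : Measure Ω) [IsProbabilityMeasure μ]
    (d : ℕ)
    (F : ℕ → MeasurableSpace Ω) (hF : ∀ k, F k ≤ m)
    (σc L C : ℝ)
    (α : ℕ → ℝ) (hα : ∀ k, 0 ≤ α k)
    (g : EuclideanSpace ℝ (Fin d) → EuclideanSpace ℝ (Fin d))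
    (hsc : ∀ x y, σc * ‖x - y‖ ^ 2 ≤ ⟪g x - g y, x - y⟫)
    (hLip : ∀ x y, ‖g x - g y‖ ≤ L * ‖x - y‖)
    (βstar : EuclideanSpace ℝ (Fin d)) (hg0 : g βstar = 0)
    (θinit : EuclideanSpace ℝ (Fin d))
    (θ G : ℕ → Ω → EuclideanSpace ℝ (Fin d))
    (hθ0 : ∀ ω, θ 0 ω = θinit)
    (hrec : ∀ k ω, θ (k + 1) ω = θ k ω - α k • G (k + 1) ω)
    (hθmeas : ∀ k, Measurable[F k] (θ k))
    (hθ2 : ∀ k, MemLp (θ k) 2 μ) (hG2 : ∀ k, MemLp (G k) 2 μ)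
    (hmean : ∀ k, μ[G (k + 1) | F k] =ᵐ[μ] fun ω => g (θ k ω))
    (hnoise : ∀ k, ∀ᵐ ω ∂μ,
      (μ[fun ωp => ‖G (k + 1) ωp - g (θ k ωp)‖ ^ 2 | F k]) ω ≤ C)
    (hfac : ∀ k, 0 ≤ 1 - 2 * α k * σc + (α k) ^ 2 * L ^ 2)
    (k : ℕ) (δ : ℝ) (hδ : 0 < δ) :
    1 - (‖θinit - βstar‖ ^ 2
          * ∏ j ∈ Finset.range (k + 1), (1 - 2 * α j * σc + (α j) ^ 2 * L ^ 2)
        + C * ((α k) ^ 2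
            + ∑ j ∈ Finset.range k, (α j) ^ 2
                * ∏ l ∈ Finset.Ico (j + 1) (k + 1),
                    (1 - 2 * α l * σc + (α l) ^ 2 * L ^ 2))) / δ ^ 2
      ≤ (μ {ω | ‖θ (k + 1) ω - βstar‖ ≤ δ}).toReal := by
  have hstep : ∀ n, ∫ ω, ‖θ (n + 1) ω - βstar‖ ^ 2 ∂μ
      ≤ (1 - 2 * α n * σc + α n ^ 2 * L ^ 2) * ∫ ω, ‖θ n ω - βstar‖ ^ 2 ∂μ
        + C * α n ^ 2 := fun n => by
    simp_rw [hrec n]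
    exact integral_norm_sub_smul_sub_sq_le (hF n) (hα n) hsc hLip hg0
      (hθmeas n).stronglyMeasurable (hθ2 n) (hG2 (n + 1)) (hmean n) (hnoise n)
  have hmse := le_mul_prod_add_sum_of_le_mul_add
    (e := fun n => ∫ ω, ‖θ n ω - βstar‖ ^ 2 ∂μ) hfac hstep (k + 1)
  have hA : ∑ j ∈ range (k + 1), C * α j ^ 2
        * ∏ l ∈ Ico (j + 1) (k + 1), (1 - 2 * α l * σc + α l ^ 2 * L ^ 2)
      = C * (α k ^ 2 + ∑ j ∈ range k, α j ^ 2
        * ∏ l ∈ Ico (j + 1) (k + 1), (1 - 2 * α l * σc + α l ^ 2 * L ^ 2)) := by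
    rw [sum_range_succ, Ico_self, prod_empty, mul_one, mul_add, mul_sum, add_comm]
    simp only [mul_assoc]
  simp only [hθ0, integral_const, probReal_univ, one_smul, hA] at hmse
  refine le_trans ?_ (one_sub_integral_norm_sq_div_le_measureReal
    (Y := fun ω => θ (k + 1) ω - βstar) ((hθ2 (k + 1)).sub (memLp_const βstar)) hδ)
  gcongr

/-- For SGD on a `σ`-strongly convex risk with `L`-Lipschitz gradient and
noise bound `C`, for any `δ > 0`:
`P(‖θ_k - β*‖ ≤ δ) ≥ 1 - [‖θ₀ - β*‖² ∏_{j=0}^{k-1}(1 - 2α_j σ + α_j² L²) + C·A_{k-1}]/δ²`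
(stated here for `k + 1`, so the product runs over `j = 0, …, k` and the
correction term is `A_k`). -/
theorem sgd_general_probability_lower_bound
    {Ω : Type*} [m : MeasurableSpace Ω] (μ : Measure Ω) [IsProbabilityMeasure μ]
    (d : ℕ)
    (F : ℕ → MeasurableSpace Ω) (hF : ∀ k, F k ≤ m)
    (σc L C : ℝ) (hσ : 0 < σc) (hL : 0 ≤ L) (hC : 0 ≤ C)
    (α : ℕ → ℝ) (hα : ∀ k, 0 ≤ α k)
    (g : EuclideanSpace ℝ (Fin d) → EuclideanSpace ℝ (Fin d))
    (hsc : ∀ x y, σc * ‖x - y‖ ^ 2 ≤ ⟪g x - g y, x - y⟫)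
    (hLip : ∀ x y, ‖g x - g y‖ ≤ L * ‖x - y‖)
    (βstar : EuclideanSpace ℝ (Fin d)) (hg0 : g βstar = 0)
    (θinit : EuclideanSpace ℝ (Fin d))
    (θ G : ℕ → Ω → EuclideanSpace ℝ (Fin d))
    (hθ0 : ∀ ω, θ 0 ω = θinit)
    (hrec : ∀ k ω, θ (k + 1) ω = θ k ω - α k • G (k + 1) ω)
    (hθmeas : ∀ k, Measurable[F k] (θ k))
    (hθ2 : ∀ k, MemLp (θ k) 2 μ) (hG2 : ∀ k, MemLp (G k) 2 μ)
    (hmean : ∀ k, μ[G (k + 1) | F k] =ᵐ[μ] fun ω => g (θ k ω))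
    (hnoise : ∀ k, ∀ᵐ ω ∂μ,
      (μ[fun ωp => ‖G (k + 1) ωp - g (θ k ωp)‖ ^ 2 | F k]) ω ≤ C)
    (hfac : ∀ k, 0 ≤ 1 - 2 * α k * σc + (α k) ^ 2 * L ^ 2)
    (k : ℕ) (δ : ℝ) (hδ : 0 < δ) :
    1 - (‖θinit - βstar‖ ^ 2
          * ∏ j ∈ Finset.range (k + 1), (1 - 2 * α j * σc + (α j) ^ 2 * L ^ 2)
        + C * ((α k) ^ 2
            + ∑ j ∈ Finset.range k, (α j) ^ 2
                * ∏ l ∈ Finset.Ico (j + 1) (k + 1),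
                    (1 - 2 * α l * σc + (α l) ^ 2 * L ^ 2))) / δ ^ 2
      ≤ (μ {ω | ‖θ (k + 1) ω - βstar‖ ≤ δ}).toReal :=
  sgd_general_probability_lower_bound_general (m := m) μ d F hF σc L C α hα g hsc hLip βstar hg0
    θinit θ G hθ0 hrec hθmeas hθ2 hG2 hmean hnoise hfac k δ hδ
end
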